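/- arXiv:2006.11468 — 7 statements merged into one kernel-verified Lean document; each statement's English description precedes it below -/
import Mathlib

section
/- For every index i and every index j ≠ i, the diagonal entry [P²]_{i,i} of the square of P is greater than or equal to the off-diagonal entry [P²]_{i,j}, with equality if and only if h = 1/n. (This is the matrix form of Theorem 2: under the stated neighbor-label model, the 2-hop neighborhood of every node is homophily-dominant in expectation.) -/
/-- Theorem 2 (matrix form): for the class-compatibility matrix `P` with diagonal
entries `h` and off-diagonal entries `ρ = (1-h)/(n-1)`, every diagonal entry of `P²`
dominates every off-diagonal entry of the same row, with equality iff `h = 1/n`. -/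
theorem h2gcn_two_hop_homophily_dominant
    (n : ℕ) (hn : 2 ≤ n) (h : ℝ) (hh0 : 0 ≤ h) (hh1 : h ≤ 1)
    (ρ : ℝ) (hρ : ρ = (1 - h) / ((n : ℝ) - 1))
    (P : Matrix (Fin n) (Fin n) ℝ)
    (hP : ∀ i j, P i j = if i = j then h else ρ) :
    ∀ i j : Fin n, j ≠ i →
      (P * P) i j ≤ (P * P) i i ∧
      ((P * P) i i = (P * P) i j ↔ h = 1 / (n : ℝ)) := by
  intro i j hij
  have hn1 : (1:ℝ) ≤ (n:ℝ) := by exact_mod_cast Nat.one_le_of_lt hn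
  have hn1' : (n:ℝ) - 1 ≠ 0 := by
    have : (2:ℝ) ≤ (n:ℝ) := by exact_mod_cast hn
    linarith
  have ediag : (P * P) i i = (n:ℝ) * ρ^2 + (h^2 - ρ^2) := by
    simp only [Matrix.mul_apply, hP]
    have : ∀ k : Fin n, (if i = k then h else ρ) * (if k = i then h else ρ)
        = ρ^2 + (if k = i then h^2 - ρ^2 else 0) := by
      intro k
      by_cases hk : k = i
      · subst hk; simp; ring
      · rw [if_neg (fun hh => hk hh.symm), if_neg hk, if_neg hk]; ring
    rw [Finset.sum_congr rfl (fun k _ => this k), Finset.sum_add_distrib,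
      Finset.sum_const, Finset.sum_ite_eq' Finset.univ i (fun _ => h^2 - ρ^2)]
    simp [Finset.card_univ]
  have eoff : (P * P) i j = (n:ℝ) * ρ^2 + 2 * (h*ρ - ρ^2) := by
    simp only [Matrix.mul_apply, hP]
    have : ∀ k : Fin n, (if i = k then h else ρ) * (if k = j then h else ρ)
        = ρ^2 + (if k = i then h*ρ - ρ^2 else 0) + (if k = j then h*ρ - ρ^2 else 0) := by
      intro k
      by_cases hk : k = i
      · subst hk
        rw [if_pos rfl, if_neg (Ne.symm hij), if_pos rfl, if_neg (Ne.symm hij)]; ring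
      · by_cases hk2 : k = j
        · subst hk2
          rw [if_neg (fun hh => hk hh.symm), if_pos rfl, if_neg hk, if_pos rfl]; ring
        · rw [if_neg (fun hh => hk hh.symm), if_neg hk2, if_neg hk, if_neg hk2]; ring
    rw [Finset.sum_congr rfl (fun k _ => this k)]
    rw [Finset.sum_add_distrib, Finset.sum_add_distrib, Finset.sum_const,
      Finset.sum_ite_eq' Finset.univ i (fun _ => h*ρ - ρ^2),
      Finset.sum_ite_eq' Finset.univ j (fun _ => h*ρ - ρ^2)]
    simp [Finset.card_univ]
    ring
  have hdiff : (P * P) i i - (P * P) i j = (h - ρ)^2 := by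
    rw [ediag, eoff]; ring
  constructor
  · nlinarith [sq_nonneg (h - ρ)]
  · constructor
    · intro heq
      have h0 : (h - ρ)^2 = 0 := by rw [← hdiff, heq]; ring
      have hhρ : h = ρ := by nlinarith [sq_nonneg (h - ρ)]
      rw [hρ] at hhρ
      field_simp at hhρ
      field_simp
      linarith
    · intro heq
      have hhρ : h = ρ := by
        rw [hρ, heq]
        field_simp
      have : (P * P) i i - (P * P) i j = 0 := by rw [hdiff, hhρ]; ring
      linarith
end

section
/- Suppose (d+1)(n−1+(nh−1)d) ≠ 0, let W be the n×n matrix with diagonal entries ((n−1)+(n−2+h)d)/D and off-diagonal entries (h−1)d/D, where D = (d+1)(n−1+(nh−1)d), and let δ be a real number. Let r ∈ ℝⁿ be the row vector with r₁ = hd+1, r₂ = ρd − δ, and r_j = ρd for all j ≥ 3. Then the product rW has first entry 1 − (h−1)dδ/D, second entry −((n−1)+(n−2+h)d)δ/D, and all remaining entries equal to −(h−1)dδ/D. (rW is the prediction of the trained GCN layer (A+I)XW on a node whose neighborhood has δ fewer class-2 neighbors than expected.) -/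
/-!
The weight matrix is `W = b J + (a - b) I` with `J` the all-ones matrix, so
`(r W)_j = b (∑ᵢ rᵢ) + (a - b) r_j`. The perturbed row sums to `d + 1 - δ`, and
`a - b = (n - 1)(d + 1) / D`; with `ρ (n - 1) = 1 - h` and the definition of `D`, the
three entries reduce to the two identities `(d + 1) b + (hd + 1)(a - b) = 1` and
`ρ d (a - b) = -(d + 1) b`.
-/

open Finset

theorem Matrix.vecMul_of_ite_eq {ι R : Type*} [Fintype ι] [DecidableEq ι] [CommRing R]
    (r : ι → R) (a b : R) (j : ι) :
    Matrix.vecMul r (Matrix.of fun i k => if i = k then a else b) j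
      = b * ∑ i, r i + (a - b) * r j := by
  have hentry : ∀ i, r i * (if i = j then a else b)
      = b * r i + if i = j then (a - b) * r i else 0 := by
    intro i
    split_ifs <;> ring
  simp only [Matrix.vecMul, dotProduct, Matrix.of_apply, hentry, sum_add_distrib, ← mul_sum,
    sum_ite_eq', mem_univ, if_true]

theorem Fin.sum_ite_val_eq_zero_one {R : Type*} [AddCommMonoid R] (m : ℕ) (x y z : R) :
    ∑ j : Fin (m + 2), (if (j : ℕ) = 0 then x else if (j : ℕ) = 1 then y else z)
      = x + y + m • z := by
  simp [Fin.sum_univ_succ, add_assoc]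

theorem sum_selfloop_perturbed_row (n : ℕ) (hn : 2 ≤ n) (d h δ : ℝ) (r : Fin n → ℝ)
    (hr : ∀ j : Fin n, r j =
      if (j : ℕ) = 0 then h * d + 1
      else if (j : ℕ) = 1 then (1 - h) / ((n : ℝ) - 1) * d - δ
      else (1 - h) / ((n : ℝ) - 1) * d) :
    ∑ j, r j = d + 1 - δ := by
  obtain ⟨m, rfl⟩ := Nat.exists_eq_add_of_le' hn
  have hm : ((m + 2 : ℕ) : ℝ) - 1 = m + 1 := by push_cast; ring
  rw [funext hr, Fin.sum_ite_val_eq_zero_one, nsmul_eq_mul, hm]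
  field_simp
  ring

theorem h2gcn_gcn_selfloop_perturbed_prediction_general
    (n : ℕ) (hn : 2 ≤ n) (d h : ℝ)
    (ρ : ℝ) (hρ : ρ = (1 - h) / ((n : ℝ) - 1))
    (D : ℝ) (hDdef : D = (d + 1) * ((n : ℝ) - 1 + ((n : ℝ) * h - 1) * d)) (hD : D ≠ 0)
    (W : Matrix (Fin n) (Fin n) ℝ)
    (hW : ∀ i j, W i j =
      if i = j then (((n : ℝ) - 1) + ((n : ℝ) - 2 + h) * d) / D
      else (h - 1) * d / D)
    (δ : ℝ) (r : Fin n → ℝ)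
    (hr : ∀ j : Fin n, r j =
      if (j : ℕ) = 0 then h * d + 1
      else if (j : ℕ) = 1 then ρ * d - δ
      else ρ * d) :
    ∀ j : Fin n, Matrix.vecMul r W j =
      if (j : ℕ) = 0 then 1 - (h - 1) * d * δ / D
      else if (j : ℕ) = 1 then -((((n : ℝ) - 1) + ((n : ℝ) - 2 + h) * d) * δ) / D
      else -((h - 1) * d * δ) / D := by
  have hn1 : (n : ℝ) - 1 ≠ 0 := by
    have : (2 : ℝ) ≤ n := by exact_mod_cast hn
    linarith
  have hsum : ∑ i, r i = d + 1 - δ := sum_selfloop_perturbed_row n hn d h δ r (hρ ▸ hr)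
  set off := (h - 1) * d / D
  set dia := ((n : ℝ) - 1 + ((n : ℝ) - 2 + h) * d) / D
  have hgap : dia - off = ((n : ℝ) - 1) * (d + 1) / D := by
    simp only [dia, off]
    ring
  have hself : (d + 1) * off + (h * d + 1) * (dia - off) = 1 := by
    simp only [hgap, off]
    field_simp
    rw [hDdef]
    ring
  have hneighbour : ρ * d * (dia - off) = -((d + 1) * off) := by
    simp only [hgap, hρ, off]
    field_simp
    ring
  have hW' : W = Matrix.of fun i k => if i = k then dia else off := Matrix.ext hW
  intro j
  rw [hW', Matrix.vecMul_of_ite_eq, hsum, hr j]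
  split_ifs
  · linear_combination hself
  · linear_combination hneighbour
  · linear_combination hneighbour

/-- Prediction of the trained GCN layer `(A+I)XW` on a node whose neighborhood has `δ`
fewer class-2 neighbors than expected: with `r = (hd+1, ρd-δ, ρd, …, ρd)` and `W` the
optimal weight matrix, `rW` has first entry `1 - (h-1)dδ/D`, second entry
`-((n-1)+(n-2+h)d)δ/D`, and all remaining entries `-(h-1)dδ/D`. -/
theorem h2gcn_gcn_selfloop_perturbed_prediction
    (n : ℕ) (hn : 2 ≤ n) (d h : ℝ) (hd : 0 < d)
    (ρ : ℝ) (hρ : ρ = (1 - h) / ((n : ℝ) - 1))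
    (D : ℝ) (hDdef : D = (d + 1) * ((n : ℝ) - 1 + ((n : ℝ) * h - 1) * d)) (hD : D ≠ 0)
    (W : Matrix (Fin n) (Fin n) ℝ)
    (hW : ∀ i j, W i j =
      if i = j then (((n : ℝ) - 1) + ((n : ℝ) - 2 + h) * d) / D
      else (h - 1) * d / D)
    (δ : ℝ) (r : Fin n → ℝ)
    (hr : ∀ j : Fin n, r j =
      if (j : ℕ) = 0 then h * d + 1
      else if (j : ℕ) = 1 then ρ * d - δ
      else ρ * d) :
    ∀ j : Fin n, Matrix.vecMul r W j =
      if (j : ℕ) = 0 then 1 - (h - 1) * d * δ / D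
      else if (j : ℕ) = 1 then -((((n : ℝ) - 1) + ((n : ℝ) - 2 + h) * d) * δ) / D
      else -((h - 1) * d * δ) / D :=
  h2gcn_gcn_selfloop_perturbed_prediction_general n hn d h ρ hρ D hDdef hD W hW δ r hr
end

section
/- Suppose (1−hn)d ≠ 0, let W be the n×n matrix with diagonal entries −(n−2+h)/((1−hn)d) and off-diagonal entries (1−h)/((1−hn)d), and let δ be a real number. Let r ∈ ℝⁿ be the row vector with r₁ = hd, r₂ = ρd − δ, and r_j = ρd for all j ≥ 3. Then the product rW has first entry 1 − (1−h)δ/((1−hn)d), second entry (n−2+h)δ/((1−hn)d), and all remaining entries equal to −(1−h)δ/((1−hn)d). (rW is the prediction of the trained GCN layer AXW, without self-loops, on a node whose neighborhood has δ fewer class-2 neighbors than expected.) -/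
/-!
`W` is `c J + (m - c) I`, with `J` the all-ones matrix and `m`, `c` the diagonal and
off-diagonal entries, so `r W = c (∑ r) 𝟙 + (m - c) r`.
Since `(n - 1) ρ = 1 - h`, the entries of `r` sum to `d - δ`, and each entry of `r W` is then
a rational identity in `n, h, d, δ`.
-/

open Finset

theorem Fin.sum_ite_val_eq_zero_ite_val_eq_one {M : Type*} [AddCommMonoid M] {n : ℕ}
    (hn : 2 ≤ n) (x y z : M) :
    ∑ j : Fin n, (if (j : ℕ) = 0 then x else if (j : ℕ) = 1 then y else z) =
      x + y + (n - 2) • z := by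
  obtain ⟨m, rfl⟩ := Nat.exists_eq_add_of_le' hn
  simp [Fin.sum_univ_succ, add_assoc]

theorem h2gcn_gcn_noselfloop_perturbed_prediction_general
    (n : ℕ) (hn : 2 ≤ n) (d h : ℝ)
    (ρ : ℝ) (hρ : ρ = (1 - h) / ((n : ℝ) - 1))
    (hD : (1 - h * (n : ℝ)) * d ≠ 0)
    (W : Matrix (Fin n) (Fin n) ℝ)
    (hW : ∀ i j, W i j =
      if i = j then -(((n : ℝ) - 2 + h)) / ((1 - h * (n : ℝ)) * d)
      else (1 - h) / ((1 - h * (n : ℝ)) * d))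
    (δ : ℝ) (r : Fin n → ℝ)
    (hr : ∀ j : Fin n, r j =
      if (j : ℕ) = 0 then h * d
      else if (j : ℕ) = 1 then ρ * d - δ
      else ρ * d) :
    ∀ j : Fin n, Matrix.vecMul r W j =
      if (j : ℕ) = 0 then 1 - (1 - h) * δ / ((1 - h * (n : ℝ)) * d)
      else if (j : ℕ) = 1 then ((n : ℝ) - 2 + h) * δ / ((1 - h * (n : ℝ)) * d)
      else -((1 - h) * δ) / ((1 - h * (n : ℝ)) * d) := by
  intro j
  have hn1 : (n : ℝ) - 1 ≠ 0 := by
    have : (2 : ℝ) ≤ n := by exact_mod_cast hn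
    linarith
  have hsum : ∑ i, r i = d - δ := by
    rw [Fintype.sum_congr _ _ hr, Fin.sum_ite_val_eq_zero_ite_val_eq_one hn, nsmul_eq_mul,
      Nat.cast_sub hn, hρ]
    field_simp
    push_cast
    ring
  have hW' : W = Matrix.of fun i k =>
      if i = k then -(((n : ℝ) - 2 + h)) / ((1 - h * (n : ℝ)) * d)
      else (1 - h) / ((1 - h * (n : ℝ)) * d) := Matrix.ext hW
  rw [hW', Matrix.vecMul_of_ite_eq, hsum, hr j]
  have h1n : 1 - h * (n : ℝ) ≠ 0 := left_ne_zero_of_mul hD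
  have hd0 : d ≠ 0 := right_ne_zero_of_mul hD
  subst hρ
  split_ifs <;> field_simp <;> ring

/-- Prediction of the trained GCN layer `AXW` (no self-loops) on a node whose
neighborhood has `δ` fewer class-2 neighbors than expected: with
`r = (hd, ρd-δ, ρd, …, ρd)` and `W` the optimal weight matrix, `rW` has first entry
`1 - (1-h)δ/((1-hn)d)`, second entry `(n-2+h)δ/((1-hn)d)`, and all remaining entries
`-(1-h)δ/((1-hn)d)`. -/
theorem h2gcn_gcn_noselfloop_perturbed_prediction
    (n : ℕ) (hn : 2 ≤ n) (d h : ℝ) (hd : 0 < d)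
    (ρ : ℝ) (hρ : ρ = (1 - h) / ((n : ℝ) - 1))
    (hD : (1 - h * (n : ℝ)) * d ≠ 0)
    (W : Matrix (Fin n) (Fin n) ℝ)
    (hW : ∀ i j, W i j =
      if i = j then -(((n : ℝ) - 2 + h)) / ((1 - h * (n : ℝ)) * d)
      else (1 - h) / ((1 - h * (n : ℝ)) * d))
    (δ : ℝ) (r : Fin n → ℝ)
    (hr : ∀ j : Fin n, r j =
      if (j : ℕ) = 0 then h * d
      else if (j : ℕ) = 1 then ρ * d - δ
      else ρ * d) :
    ∀ j : Fin n, Matrix.vecMul r W j =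
      if (j : ℕ) = 0 then 1 - (1 - h) * δ / ((1 - h * (n : ℝ)) * d)
      else if (j : ℕ) = 1 then ((n : ℝ) - 2 + h) * δ / ((1 - h * (n : ℝ)) * d)
      else -((1 - h) * δ) / ((1 - h * (n : ℝ)) * d) :=
  h2gcn_gcn_noselfloop_perturbed_prediction_general n hn d h ρ hρ hD W hW δ r hr
end

section
/- Let δ be a real number. If 0 ≤ h < 1/n, then the inequality 1 − (1−h)δ/((1−hn)d) < (n−2+h)δ/((1−hn)d) holds if and only if δ > (1−hn)d/(n−1); if instead h > 1/n, it holds if and only if δ < (1−hn)d/(n−1). (This characterizes exactly when the trained GCN layer without self-loops, AXW, misclassifies a node whose neighborhood is perturbed by δ, and shows the least absolute perturbation needed is |δ₂| = |(1−hn)d/(n−1)|.) -/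
/-! The two terms of the misclassification inequality share the denominator `(1 - h n) d`, so it
collapses to `1 < (n - 1) δ / ((1 - h n) d)`. Since `n - 1 > 0`, solving for `δ` keeps or flips
the direction according to the sign of `1 - h n`, i.e. according to whether `h < 1/n` or
`h > 1/n`. -/

section LinearOrderedField

variable {α : Type*} [Field α] [LinearOrder α] [IsStrictOrderedRing α]

theorem one_sub_mul_div_lt_mul_div_iff (p q x a : α) :
    1 - p * x / a < q * x / a ↔ 1 < (p + q) * x / a := by
  rw [sub_lt_iff_lt_add, ← add_div, add_mul, add_comm (q * x)]

theorem one_lt_mul_div_iff_of_pos {m x a : α} (hm : 0 < m) (ha : 0 < a) :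
    1 < m * x / a ↔ a / m < x := by
  rw [one_lt_div ha, div_lt_iff₀' hm]

theorem one_lt_mul_div_iff_of_neg {m x a : α} (hm : 0 < m) (ha : a < 0) :
    1 < m * x / a ↔ x < a / m := by
  rw [one_lt_div_of_neg ha, lt_div_iff₀' hm]

end LinearOrderedField

theorem h2gcn_gcn_noselfloop_misclassification_threshold_general
    (n : ℕ) (hn : 2 ≤ n) (d h : ℝ) (hd : 0 < d)
    (δ : ℝ) :
    (h < 1 / (n : ℝ) →
      (1 - (1 - h) * δ / ((1 - h * (n : ℝ)) * d) <
          ((n : ℝ) - 2 + h) * δ / ((1 - h * (n : ℝ)) * d) ↔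
        δ > (1 - h * (n : ℝ)) * d / ((n : ℝ) - 1))) ∧
    (h > 1 / (n : ℝ) →
      (1 - (1 - h) * δ / ((1 - h * (n : ℝ)) * d) <
          ((n : ℝ) - 2 + h) * δ / ((1 - h * (n : ℝ)) * d) ↔
        δ < (1 - h * (n : ℝ)) * d / ((n : ℝ) - 1))) := by
  have hn' : (2 : ℝ) ≤ n := by exact_mod_cast hn
  have hn_pos : (0 : ℝ) < n := by linarith
  have hn_sub_one : (0 : ℝ) < n - 1 := by linarith
  rw [one_sub_mul_div_lt_mul_div_iff, show 1 - h + (n - 2 + h) = (n : ℝ) - 1 by ring]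
  constructor
  · intro hlt
    have hc : 0 < 1 - h * n := by rw [lt_div_iff₀ hn_pos] at hlt; linarith
    exact one_lt_mul_div_iff_of_pos hn_sub_one (mul_pos hc hd)
  · intro hgt
    have hc : 1 - h * n < 0 := by rw [gt_iff_lt, div_lt_iff₀ hn_pos] at hgt; linarith
    exact one_lt_mul_div_iff_of_neg hn_sub_one (mul_neg_of_neg_of_pos hc hd)

/-- Misclassification condition for the trained GCN layer without self-loops `AXW`:
if `0 ≤ h < 1/n` then `1 - (1-h)δ/((1-hn)d) < (n-2+h)δ/((1-hn)d)` iff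
`δ > (1-hn)d/(n-1)`; if instead `h > 1/n`, it holds iff `δ < (1-hn)d/(n-1)`. -/
theorem h2gcn_gcn_noselfloop_misclassification_threshold
    (n : ℕ) (hn : 2 ≤ n) (d h : ℝ) (hd : 0 < d) (hh0 : 0 ≤ h) (hh1 : h ≤ 1)
    (δ : ℝ) :
    (h < 1 / (n : ℝ) →
      (1 - (1 - h) * δ / ((1 - h * (n : ℝ)) * d) <
          ((n : ℝ) - 2 + h) * δ / ((1 - h * (n : ℝ)) * d) ↔
        δ > (1 - h * (n : ℝ)) * d / ((n : ℝ) - 1))) ∧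
    (h > 1 / (n : ℝ) →
      (1 - (1 - h) * δ / ((1 - h * (n : ℝ)) * d) <
          ((n : ℝ) - 2 + h) * δ / ((1 - h * (n : ℝ)) * d) ↔
        δ < (1 - h * (n : ℝ)) * d / ((n : ℝ) - 1))) :=
  h2gcn_gcn_noselfloop_misclassification_threshold_general n hn d h hd δ
end

section
/- Set δ₁ = (d+1−n−hnd)/(n−1) and δ₂ = (1−hn)d/(n−1). Then |δ₁| < |δ₂| if and only if h < (1−n+2d)/(2nd), and |δ₁| = |δ₂| if and only if h = (1−n+2d)/(2nd). (This is the quantitative core of Theorem 1: for h < (1−n+2d)/(2nd), the GCN layer (A+I)XW that mixes ego- and neighbor-embeddings is misclassified by a strictly smaller perturbation of the neighborhood than the layer AXW that separates them, i.e., it is less robust under heterophily.) -/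
lemma abs_lt_abs_succ_iff (a : ℝ) : |a| < |a + 1| ↔ -2⁻¹ < a := by
  rw [← sq_lt_sq]
  constructor <;> intro H <;> nlinarith

lemma abs_eq_abs_succ_iff (a : ℝ) : |a| = |a + 1| ↔ a = -2⁻¹ := by
  rw [abs_eq_abs]
  constructor
  · rintro (H | H) <;> linarith
  · intro H; right; linarith

/-- Quantitative core of Theorem 1: with misclassification thresholds
`δ₁ = (d+1-n-hnd)/(n-1)` (GCN layer `(A+I)XW` with self-loops) and
`δ₂ = (1-hn)d/(n-1)` (layer `AXW` without self-loops), we have `|δ₁| < |δ₂|` iff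
`h < (1-n+2d)/(2nd)`, and `|δ₁| = |δ₂|` iff `h = (1-n+2d)/(2nd)`. -/
theorem h2gcn_selfloop_less_robust_under_heterophily
    (n : ℕ) (hn : 2 ≤ n) (d h : ℝ) (hd : 0 < d) (hh0 : 0 ≤ h) (hh1 : h ≤ 1)
    (δ₁ δ₂ : ℝ)
    (h1 : δ₁ = (d + 1 - (n : ℝ) - h * (n : ℝ) * d) / ((n : ℝ) - 1))
    (h2 : δ₂ = (1 - h * (n : ℝ)) * d / ((n : ℝ) - 1)) :
    (|δ₁| < |δ₂| ↔ h < (1 - (n : ℝ) + 2 * d) / (2 * (n : ℝ) * d)) ∧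
    (|δ₁| = |δ₂| ↔ h = (1 - (n : ℝ) + 2 * d) / (2 * (n : ℝ) * d)) := by
  have hn2 : (2 : ℝ) ≤ (n : ℝ) := by exact_mod_cast hn
  have hn1 : (0 : ℝ) < (n : ℝ) - 1 := by linarith
  have hnd : (0 : ℝ) < 2 * (n : ℝ) * d := by nlinarith
  have e2 : δ₂ = δ₁ + 1 := by
    rw [h1, h2]
    field_simp
    ring
  have keylt : (-2⁻¹ < δ₁) ↔ h < (1 - (n : ℝ) + 2 * d) / (2 * (n : ℝ) * d) := by
    rw [h1, lt_div_iff₀ hn1, lt_div_iff₀ hnd]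
    constructor <;> intro H <;> nlinarith
  have keyeq : (δ₁ = -2⁻¹) ↔ h = (1 - (n : ℝ) + 2 * d) / (2 * (n : ℝ) * d) := by
    rw [h1, div_eq_iff hn1.ne', eq_div_iff hnd.ne']
    constructor <;> intro H
    · linear_combination (-2 : ℝ) * H
    · linear_combination (-2⁻¹ : ℝ) * H
  refine ⟨?_, ?_⟩
  · rw [e2, abs_lt_abs_succ_iff, keylt]
  · rw [e2, abs_eq_abs_succ_iff, keyeq]
end

section
/- Suppose 0 ≤ h < (d+1−n)/(nd) and (d+1)(n−1+(nh−1)d) ≠ 0. Let W be the n×n matrix with diagonal entries ((n−1)+(n−2+h)d)/D and off-diagonal entries (h−1)d/D, where D = (d+1)(n−1+(nh−1)d), let δ be real, and let r ∈ ℝⁿ have r₁ = hd+1, r₂ = ρd − δ, and r_j = ρd for j ≥ 3. Then the first entry of rW is strictly less than its second entry if and only if δ > (d+1−n−hnd)/(n−1). (That is, under heterophily h < (d+1−n)/(nd), the trained GCN layer with self-loops misclassifies the perturbed node exactly when the perturbation exceeds δ₁ = (d+1−n−hnd)/(n−1).) -/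
/-- Under heterophily `0 ≤ h < (d+1-n)/(nd)` (with `D = (d+1)(n-1+(nh-1)d) ≠ 0`), the
trained GCN layer with self-loops misclassifies the perturbed node — i.e. the first
entry of `rW` is strictly less than its second entry — exactly when
`δ > (d+1-n-hnd)/(n-1)`. -/
theorem h2gcn_gcn_selfloop_misclassifies_iff
    (n : ℕ) (hn : 2 ≤ n) (d h : ℝ) (hd : 0 < d)
    (hh0 : 0 ≤ h) (hh : h < (d + 1 - (n : ℝ)) / ((n : ℝ) * d))
    (D : ℝ) (hDdef : D = (d + 1) * ((n : ℝ) - 1 + ((n : ℝ) * h - 1) * d)) (hD : D ≠ 0)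
    (ρ : ℝ) (hρ : ρ = (1 - h) / ((n : ℝ) - 1))
    (W : Matrix (Fin n) (Fin n) ℝ)
    (hW : ∀ i j, W i j =
      if i = j then (((n : ℝ) - 1) + ((n : ℝ) - 2 + h) * d) / D
      else (h - 1) * d / D)
    (δ : ℝ) (r : Fin n → ℝ)
    (hr : ∀ j : Fin n, r j =
      if (j : ℕ) = 0 then h * d + 1
      else if (j : ℕ) = 1 then ρ * d - δ
      else ρ * d) :
    Matrix.vecMul r W ⟨0, by omega⟩ < Matrix.vecMul r W ⟨1, by omega⟩ ↔
      δ > (d + 1 - (n : ℝ) - h * (n : ℝ) * d) / ((n : ℝ) - 1) := by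
  have hn2 : (2:ℝ) ≤ (n:ℝ) := by exact_mod_cast hn
  have hn1 : (0:ℝ) < (n:ℝ) - 1 := by linarith
  have hnd : (0:ℝ) < (n:ℝ) * d := by positivity
  have hmul := (lt_div_iff₀ hnd).mp hh
  have hneg : (n:ℝ) - 1 + ((n:ℝ) * h - 1) * d < 0 := by nlinarith
  have hDneg : D < 0 := by rw [hDdef]; nlinarith
  set a : ℝ := (((n : ℝ) - 1) + ((n : ℝ) - 2 + h) * d) / D with ha
  set b : ℝ := (h - 1) * d / D with hb
  have hab : a - b < 0 := by
    have : a - b = (((n:ℝ) - 1) * (d + 1)) / D := by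
      rw [ha, hb, div_sub_div_same]; ring_nf
    rw [this]
    apply div_neg_of_pos_of_neg
    · nlinarith
    · exact hDneg
  have key : ∀ j : Fin n, Matrix.vecMul r W j = b * (∑ i, r i) + (a - b) * r j := by
    intro j
    simp only [Matrix.vecMul, dotProduct]
    have : ∀ i : Fin n, r i * W i j = r i * b + (if i = j then r i * (a - b) else 0) := by
      intro i
      rw [hW i j]
      split <;> ring
    rw [Finset.sum_congr rfl (fun i _ => this i), Finset.sum_add_distrib,
      Finset.sum_ite_eq' Finset.univ j (fun i => r i * (a - b)),
      if_pos (Finset.mem_univ j), ← Finset.sum_mul]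
    ring
  have h0 : r ⟨0, by omega⟩ = h * d + 1 := by rw [hr]; simp
  have h1 : r ⟨1, by omega⟩ = ρ * d - δ := by rw [hr]; simp
  rw [key, key, h0, h1]
  have hδ1 : (d + 1 - (n : ℝ) - h * (n : ℝ) * d) / ((n : ℝ) - 1) = ρ * d - h * d - 1 := by
    rw [hρ]; field_simp; ring
  rw [hδ1]
  constructor
  · intro hlt
    nlinarith
  · intro hgt
    nlinarith
end

section
/- Let s, t : V → {0,1} be signals with edge homophily ratios satisfying h_s < h_t. Let n = |V|, and let v₀, …, v_{n−1} be an orthonormal family of vectors in ℝ^V together with real numbers λ₀ ≤ λ₁ ≤ … ≤ λ_{n−1} such that λ₀ = 0 and L v_i = λ_i v_i for every i. Define the spectral coefficients c_{s,i} = ⟨s, v_i⟩ and c_{t,i} = ⟨t, v_i⟩. Then there exists an integer M with 1 ≤ M ≤ n−1 such that Σ_{i=M}^{n−1} c_{s,i}² > Σ_{i=M}^{n−1} c_{t,i}². (Theorem 3: the signal with lower edge homophily has higher energy in the high-frequency components of the spectrum of the unnormalized graph Laplacian.) -/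
/-!
For a `{0,1}`-valued signal `x`, the Laplacian quadratic form `xᵀ L x = Σ_{uv ∈ E} (x u - x v)²`
counts the heterophilous edges, so `h_s < h_t` means `sᵀ L s > tᵀ L t`. In the eigenbasis
`xᵀ L x = Σ λ_i c_{x,i}²`. Writing each `λ_i` as the telescoping sum of the nonnegative gaps
`λ_{j+1} - λ_j` (as `λ_0 = 0`) turns `Σ λ_i (c_{s,i}² - c_{t,i}²) > 0` into a positive
combination of the tail sums `Σ_{i > j} (c_{s,i}² - c_{t,i}²)`, one of which must be positive.
-/

open Finset Matrix

namespace SimpleGraph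

variable {V : Type*} [Fintype V] (G : SimpleGraph V) [DecidableRel G.Adj]

theorem sum_darts_edge_eq_two_mul_sum_edgeFinset [DecidableEq V] {R : Type*}
    [NonAssocSemiring R] (f : Sym2 V → R) :
    ∑ d : G.Dart, f d.edge = 2 * ∑ e ∈ G.edgeFinset, f e := by
  rw [← sum_fiberwise_of_maps_to (g := Dart.edge) (t := G.edgeFinset) (fun d _ => by simp),
    mul_sum]
  refine sum_congr rfl fun e he => ?_
  rw [sum_congr rfl fun d hd => by rw [(mem_filter.mp hd).2], sum_const,
    G.dart_edge_fiber_card e (mem_edgeFinset.mp he), nsmul_eq_mul, Nat.cast_two]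

theorem sum_sum_ite_adj_eq_sum_darts {M : Type*} [AddCommMonoid M] (f : V → V → M) :
    ∑ i, ∑ j, (if G.Adj i j then f i j else 0) = ∑ d : G.Dart, f d.fst d.snd := by
  rw [← sum_product', ← sum_filter]
  refine (sum_bij (fun d _ => d.toProd) (fun d _ => by simp [d.adj])
    (fun _ _ _ _ h => Dart.ext _ _ h) (fun p hp => ⟨⟨p, (mem_filter.mp hp).2⟩, mem_univ _, rfl⟩)
    (fun _ _ => rfl)).symm

theorem dotProduct_lapMatrix_mulVec [DecidableEq V] (x : V → ℝ) :
    x ⬝ᵥ G.lapMatrix ℝ *ᵥ x =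
      ∑ e ∈ G.edgeFinset,
        Sym2.lift ⟨fun u w => (x u - x w) ^ 2, fun u w => sub_sq_comm (x u) (x w)⟩ e := by
  rw [← toLinearMap₂'_apply', lapMatrix_toLinearMap₂', sum_sum_ite_adj_eq_sum_darts,
    div_eq_iff two_ne_zero, mul_comm, ← sum_darts_edge_eq_two_mul_sum_edgeFinset]
  rfl

theorem dotProduct_lapMatrix_mulVec_of_zero_or_one [DecidableEq V] (x : V → ℝ)
    (hx : ∀ u, x u = 0 ∨ x u = 1) :
    x ⬝ᵥ G.lapMatrix ℝ *ᵥ x = #G.edgeFinset - ∑ e ∈ G.edgeFinset,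
      Sym2.lift ⟨fun u w => if x u = x w then (1 : ℝ) else 0,
        fun _ _ => if_congr eq_comm rfl rfl⟩ e := by
  have hterm : ∀ e : Sym2 V,
      Sym2.lift ⟨fun u w => (x u - x w) ^ 2, fun u w => sub_sq_comm (x u) (x w)⟩ e =
        1 - Sym2.lift ⟨fun u w => if x u = x w then (1 : ℝ) else 0,
          fun _ _ => if_congr eq_comm rfl rfl⟩ e := by
    refine Sym2.ind fun a b => ?_
    rcases hx a with ha | ha <;> rcases hx b with hb | hb <;> norm_num [ha, hb]
  rw [dotProduct_lapMatrix_mulVec, sum_congr rfl fun e _ => hterm e, sum_sub_distrib]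
  simp

end SimpleGraph

namespace Matrix

variable {ι V R : Type*} [Fintype ι] [DecidableEq ι] [Fintype V] [DecidableEq V] [CommRing R]

theorem sum_dotProduct_smul_of_orthonormal (hcard : Fintype.card ι = Fintype.card V)
    (v : ι → V → R) (horth : ∀ i j, v i ⬝ᵥ v j = if i = j then 1 else 0) (x : V → R) :
    ∑ i, (x ⬝ᵥ v i) • v i = x := by
  have hrows : of v * (of v)ᵀ = 1 := by
    ext i j
    exact horth i j
  have hcols : (of v)ᵀ * of v = 1 :=
    (mul_eq_one_comm_of_equiv (Fintype.equivOfCardEq hcard)).mp hrows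
  calc ∑ i, (x ⬝ᵥ v i) • v i = (of v)ᵀ *ᵥ (of v *ᵥ x) := by
        rw [mulVec_transpose, vecMul_eq_sum]
        exact sum_congr rfl fun i _ => by rw [dotProduct_comm]; rfl
    _ = x := by rw [mulVec_mulVec, hcols, one_mulVec]

theorem dotProduct_mulVec_eq_sum_of_orthonormal_eigenvectors
    (hcard : Fintype.card ι = Fintype.card V) (A : Matrix V V R) (v : ι → V → R)
    (horth : ∀ i j, v i ⬝ᵥ v j = if i = j then 1 else 0) (lam : ι → R)
    (heig : ∀ i, A *ᵥ v i = lam i • v i) (x : V → R) :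
    x ⬝ᵥ A *ᵥ x = ∑ i, lam i * (x ⬝ᵥ v i) ^ 2 := by
  conv_lhs => enter [2, 2]; rw [← sum_dotProduct_smul_of_orthonormal hcard v horth x]
  simp only [mulVec_sum, mulVec_smul, heig, dotProduct_sum, dotProduct_smul, smul_smul,
    smul_eq_mul]
  exact sum_congr rfl fun i _ => by ring

end Matrix

theorem sum_mul_eq_sum_sub_mul_sum_tail {n : ℕ} (L : ℕ → ℝ) (hL0 : L 0 = 0) (g : Fin n → ℝ) :
    ∑ i : Fin n, L i * g i =
      ∑ j ∈ range n,
        (L (j + 1) - L j) * ∑ i ∈ univ.filter (fun i : Fin n => j + 1 ≤ (i : ℕ)), g i := by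
  calc ∑ i : Fin n, L i * g i = ∑ i : Fin n, ∑ j ∈ range i, (L (j + 1) - L j) * g i := by
        refine sum_congr rfl fun i _ => ?_
        rw [← sum_mul, sum_range_sub, hL0, sub_zero]
    _ = ∑ j ∈ range n, ∑ i ∈ univ.filter (fun i : Fin n => j + 1 ≤ (i : ℕ)),
          (L (j + 1) - L j) * g i :=
        sum_comm' fun i j => by simp only [mem_range, mem_filter, mem_univ, true_and]; omega
    _ = _ := by simp only [mul_sum]

theorem exists_sum_tail_pos_of_sum_mul_pos {n : ℕ} (lam : Fin n → ℝ) (hmono : Monotone lam)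
    (hlam0 : ∀ h0 : 0 < n, lam ⟨0, h0⟩ = 0) (g : Fin n → ℝ) (hpos : 0 < ∑ i, lam i * g i) :
    ∃ M : ℕ, 1 ≤ M ∧ M ≤ n - 1 ∧ 0 < ∑ i ∈ univ.filter (fun i : Fin n => M ≤ (i : ℕ)), g i := by
  have hn : 0 < n := Nat.pos_of_ne_zero fun h => by subst h; simp at hpos
  set L : ℕ → ℝ := fun k => lam ⟨min k (n - 1), by omega⟩
  have hL : ∀ i : Fin n, L i = lam i := fun i => congrArg lam (Fin.ext (min_eq_left (by omega)))
  have hLmono : Monotone L := fun a b hab => hmono (by simp only [Fin.mk_le_mk]; omega)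
  rw [show ∑ i, lam i * g i = ∑ i : Fin n, L i * g i by simp only [hL],
    sum_mul_eq_sum_sub_mul_sum_tail L (by simpa [L] using hlam0 hn)] at hpos
  obtain ⟨j, -, hj⟩ := exists_lt_of_sum_lt (sum_const_zero.trans_lt hpos)
  have htail := pos_of_mul_pos_right hj (sub_nonneg.mpr (hLmono j.le_succ))
  obtain ⟨i, hi, -⟩ := exists_ne_zero_of_sum_ne_zero htail.ne'
  exact ⟨j + 1, by omega, by simp only [mem_filter] at hi; omega, htail⟩

theorem h2gcn_lower_homophily_higher_frequency_energy_general
    {V : Type*} [Fintype V] [DecidableEq V]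
    (G : SimpleGraph V) [DecidableRel G.Adj]
    (s t : V → ℝ) (hs : ∀ v, s v = 0 ∨ s v = 1) (ht : ∀ v, t v = 0 ∨ t v = 1)
    (hst : (∑ e ∈ G.edgeFinset,
        Sym2.lift ⟨fun u v => if s u = s v then (1 : ℝ) else 0,
          fun u v => if_congr eq_comm rfl rfl⟩ e) / (G.edgeFinset.card : ℝ) <
      (∑ e ∈ G.edgeFinset,
        Sym2.lift ⟨fun u v => if t u = t v then (1 : ℝ) else 0,
          fun u v => if_congr eq_comm rfl rfl⟩ e) / (G.edgeFinset.card : ℝ))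
    (n : ℕ) (hn : n = Fintype.card V)
    (v : Fin n → (V → ℝ))
    (horth : ∀ i j, dotProduct (v i) (v j) = if i = j then (1 : ℝ) else 0)
    (lam : Fin n → ℝ) (hmono : Monotone lam)
    (hlam0 : ∀ h0 : 0 < n, lam ⟨0, h0⟩ = 0)
    (heig : ∀ i, Matrix.mulVec (G.lapMatrix ℝ) (v i) = lam i • v i) :
    ∃ M : ℕ, 1 ≤ M ∧ M ≤ n - 1 ∧
      ∑ i ∈ Finset.univ.filter (fun i : Fin n => M ≤ (i : ℕ)),
          (dotProduct t (v i)) ^ 2 <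
      ∑ i ∈ Finset.univ.filter (fun i : Fin n => M ≤ (i : ℕ)),
          (dotProduct s (v i)) ^ 2 := by
  have hcard : Fintype.card (Fin n) = Fintype.card V := by simp [hn]
  have hhomophily := lt_of_not_ge fun h =>
    (div_le_div_of_nonneg_right h (Nat.cast_nonneg #G.edgeFinset)).not_gt hst
  have henergy : t ⬝ᵥ G.lapMatrix ℝ *ᵥ t < s ⬝ᵥ G.lapMatrix ℝ *ᵥ s := by
    rw [G.dotProduct_lapMatrix_mulVec_of_zero_or_one s hs,
      G.dotProduct_lapMatrix_mulVec_of_zero_or_one t ht]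
    linarith
  rw [dotProduct_mulVec_eq_sum_of_orthonormal_eigenvectors hcard _ v horth lam heig,
    dotProduct_mulVec_eq_sum_of_orthonormal_eigenvectors hcard _ v horth lam heig,
    ← sub_pos, ← sum_sub_distrib] at henergy
  obtain ⟨M, hM1, hMn, htail⟩ := exists_sum_tail_pos_of_sum_mul_pos lam hmono hlam0
    (fun i => (s ⬝ᵥ v i) ^ 2 - (t ⬝ᵥ v i) ^ 2) (by simpa only [mul_sub] using henergy)
  exact ⟨M, hM1, hMn, by rwa [sum_sub_distrib, sub_pos] at htail⟩

/-- Theorem 3: let `s, t` be `{0,1}`-valued signals on a finite simple graph `G` (with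
at least one edge) whose edge homophily ratios satisfy `h_s < h_t`, and let
`v₀, …, v_{n-1}` (with `n = |V|`) be an orthonormal eigenfamily of the unnormalized
Laplacian `L` with nondecreasing eigenvalues `λ₀ = 0 ≤ λ₁ ≤ … ≤ λ_{n-1}`. Then there
is `1 ≤ M ≤ n-1` such that the high-frequency energies of the spectral coefficients
satisfy `Σ_{i=M}^{n-1} c_{s,i}² > Σ_{i=M}^{n-1} c_{t,i}²`. -/
theorem h2gcn_lower_homophily_higher_frequency_energy
    {V : Type*} [Fintype V] [DecidableEq V]
    (G : SimpleGraph V) [DecidableRel G.Adj]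
    (hE : G.edgeFinset.Nonempty)
    (s t : V → ℝ) (hs : ∀ v, s v = 0 ∨ s v = 1) (ht : ∀ v, t v = 0 ∨ t v = 1)
    (hst : (∑ e ∈ G.edgeFinset,
        Sym2.lift ⟨fun u v => if s u = s v then (1 : ℝ) else 0,
          fun u v => if_congr eq_comm rfl rfl⟩ e) / (G.edgeFinset.card : ℝ) <
      (∑ e ∈ G.edgeFinset,
        Sym2.lift ⟨fun u v => if t u = t v then (1 : ℝ) else 0,
          fun u v => if_congr eq_comm rfl rfl⟩ e) / (G.edgeFinset.card : ℝ))
    (n : ℕ) (hn : n = Fintype.card V)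
    (v : Fin n → (V → ℝ))
    (horth : ∀ i j, dotProduct (v i) (v j) = if i = j then (1 : ℝ) else 0)
    (lam : Fin n → ℝ) (hmono : Monotone lam)
    (hlam0 : ∀ h0 : 0 < n, lam ⟨0, h0⟩ = 0)
    (heig : ∀ i, Matrix.mulVec (G.lapMatrix ℝ) (v i) = lam i • v i) :
    ∃ M : ℕ, 1 ≤ M ∧ M ≤ n - 1 ∧
      ∑ i ∈ Finset.univ.filter (fun i : Fin n => M ≤ (i : ℕ)),
          (dotProduct t (v i)) ^ 2 <
      ∑ i ∈ Finset.univ.filter (fun i : Fin n => M ≤ (i : ℕ)),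
          (dotProduct s (v i)) ^ 2 :=
  h2gcn_lower_homophily_higher_frequency_energy_general G s t hs ht hst n hn v horth lam hmono hlam0
    heig
end
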